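/- arXiv:1712.03047 — 6 statements merged into one kernel-verified Lean document; each statement's English description precedes it below -/
import Mathlib

section
/- There exists a constant C = C(α) > 0 such that for all integers n ≥ 1 and α ∈ (0,1), the sum ∑_{j=1}^{n} b_{jn} / j^{1-α} is bounded by C·η(n), where η(n) = n^{-α} if α ∈ (0,1/2), η(n) = n^{-1/2} ln(n+1) if α = 1/2, and η(n) = n^{-(1-α)} if α ∈ (1/2,1). -/
/-! For `x ∈ [j - 1, j]` we have `j ^ (α - 1) ≤ max x 1 ^ (α - 1)`, so the sum is at most
`∫₀ⁿ x ^ (α - 1) max(x, 1) ^ (α - 1) (n - x) ^ (-α) dx`. Splitting this integral at `n / 2`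
bounds it by a multiple of `n ^ (-α) (1 + ∫₁ⁿ x ^ (2α - 2) dx) + n ^ (α - 1)`, and the second
term is dominated by the first. The three regimes of `η` are the three behaviours of
`∫₁ⁿ x ^ (2α - 2) dx`: bounded for `α < 1/2`, `log n` for `α = 1/2`, of order `n ^ (2α - 1)`
for `α > 1/2`. -/

open Real Finset

/-- The coefficient `b_{jn} = ∫_{j-1}^{j} x^{α-1} (n-x)^{-α} dx`. -/
noncomputable def bCoeff (α : ℝ) (j n : ℕ) : ℝ :=
  ∫ x in ((j : ℝ) - 1)..(j : ℝ), x ^ (α - 1) * ((n : ℝ) - x) ^ (-α)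

/-- The majorant `η(n)` depending on the range of `α`. -/
noncomputable def eta (α : ℝ) (n : ℕ) : ℝ :=
  if α < 1/2 then (n : ℝ) ^ (-α)
  else if α = 1/2 then (n : ℝ) ^ (-(1/2 : ℝ)) * Real.log ((n : ℝ) + 1)
  else (n : ℝ) ^ (-(1 - α))

open intervalIntegral MeasureTheory

theorem intervalIntegral.integral_mono_on_Ioo_of_nonneg {f g : ℝ → ℝ} {a b : ℝ}
    (hab : a ≤ b) (hg : IntervalIntegrable g volume a b) (hf : ∀ x ∈ Set.Ioo a b, 0 ≤ f x)
    (hfg : ∀ x ∈ Set.Ioo a b, f x ≤ g x) :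
    ∫ x in a..b, f x ≤ ∫ x in a..b, g x := by
  by_cases hfi : IntervalIntegrable f volume a b
  · exact integral_mono_on_of_le_Ioo hab hfi hg hfg
  · rw [integral_undef hfi]
    simpa using integral_mono_on_of_le_Ioo hab intervalIntegrable_const hg
      fun x hx => (hf x hx).trans (hfg x hx)

theorem integral_sub_rpow {r : ℝ} (hr : -1 < r) (c : ℝ) :
    ∫ x in (0 : ℝ)..c, (c - x) ^ r = c ^ (r + 1) / (r + 1) := by
  rw [integral_comp_sub_left (fun x => x ^ r), sub_self, sub_zero,
    integral_rpow (Or.inl hr), zero_rpow (by linarith), sub_zero]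

theorem intervalIntegrable_sub_rpow {r : ℝ} (hr : -1 < r) (c a b : ℝ) :
    IntervalIntegrable (fun x => (c - x) ^ r) volume a b := by
  simpa using (intervalIntegrable_rpow' (a := c - a) (b := c - b) hr).comp_sub_left c

theorem integral_one_rpow {r b : ℝ} (hr : r ≠ -1) (hb : 1 ≤ b) :
    ∫ x in (1 : ℝ)..b, x ^ r = (b ^ (r + 1) - 1) / (r + 1) := by
  rw [integral_rpow (Or.inr ⟨hr, fun h => by rw [Set.uIcc_of_le hb] at h; linarith [h.1]⟩),
    one_rpow]

theorem integral_one_rpow_le_of_lt_neg_one {r b : ℝ} (hr : r < -1) (hb : 1 ≤ b) :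
    ∫ x in (1 : ℝ)..b, x ^ r ≤ -1 / (r + 1) := by
  rw [integral_one_rpow hr.ne hb]
  exact div_le_div_of_nonpos_of_le (by linarith)
    (by linarith [rpow_nonneg (zero_le_one.trans hb) (r + 1)])

theorem integral_one_rpow_le_of_neg_one_lt {r b : ℝ} (hr : -1 < r) (hb : 1 ≤ b) :
    ∫ x in (1 : ℝ)..b, x ^ r ≤ b ^ (r + 1) / (r + 1) := by
  rw [integral_one_rpow hr.ne' hb]
  gcongr
  · linarith
  · linarith

theorem integral_one_rpow_neg_one {b : ℝ} (hb : 1 ≤ b) :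
    ∫ x in (1 : ℝ)..b, x ^ (-1 : ℝ) = log b := by
  rw [integral_congr fun x _ => rpow_neg_one x, integral_inv_of_pos one_pos (by linarith), div_one]

theorem rpow_add_one_le_one_add_integral {r b : ℝ} (hr : r ≤ 0) (hb : 1 ≤ b) :
    b ^ (r + 1) ≤ 1 + ∫ x in (1 : ℝ)..b, x ^ r := by
  have hb0 : 0 < b := by linarith
  have hcell : (b - 1) * b ^ r ≤ ∫ x in (1 : ℝ)..b, x ^ r := by
    simpa using integral_mono_on (μ := volume) hb intervalIntegrable_const
      (intervalIntegrable_rpow (Or.inr fun h => by rw [Set.uIcc_of_le hb] at h; linarith [h.1]))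
      fun x hx => rpow_le_rpow_of_nonpos (by linarith [hx.1]) hx.2 hr
  have hbr : b ^ r ≤ 1 := rpow_le_one_of_one_le_of_nonpos hb hr
  rw [rpow_add_one hb0.ne']
  nlinarith

section

variable {α : ℝ}

theorem intervalIntegrable_rpow_mul_max_one_rpow (h0 : 0 < α) (a b : ℝ) :
    IntervalIntegrable (fun x : ℝ => x ^ (α - 1) * max x 1 ^ (α - 1)) volume a b :=
  (intervalIntegrable_rpow' (by linarith)).mul_continuousOn <|
    (continuous_id.max continuous_const).continuousOn.rpow_const
      fun x _ => Or.inl (by positivity)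

theorem integral_rpow_mul_max_one_rpow (h0 : 0 < α) {b : ℝ} (hb : 1 ≤ b) :
    ∫ x in (0 : ℝ)..b, x ^ (α - 1) * max x 1 ^ (α - 1) =
      1 / α + ∫ x in (1 : ℝ)..b, x ^ (2 * α - 2) := by
  rw [← integral_add_adjacent_intervals (intervalIntegrable_rpow_mul_max_one_rpow h0 0 1)
    (intervalIntegrable_rpow_mul_max_one_rpow h0 1 b)]
  congr 1
  · rw [integral_congr (g := fun x => x ^ (α - 1)) fun x hx => by
        rw [Set.uIcc_of_le zero_le_one] at hx
        simp only [max_eq_right hx.2, one_rpow, mul_one],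
      integral_rpow (Or.inl (by linarith)), zero_rpow (by linarith), one_rpow]
    ring_nf
  · refine integral_congr fun x hx => ?_
    rw [Set.uIcc_of_le hb] at hx
    rw [max_eq_left hx.1, ← rpow_add (by linarith [hx.1])]
    ring_nf

variable (h0 : 0 < α) (h1 : α < 1)
include h0 h1

/-- Left of `n / 2` the factor `(n - x) ^ (-α)` is at most `(n / 2) ^ (-α)`; right of it the
factor `x ^ (α - 1) * max x 1 ^ (α - 1)` is at most `(n / 2) ^ (2 α - 2)`. -/
theorem rpow_mul_sub_rpow_div_le {j n : ℕ} {x : ℝ} (hj : 1 ≤ j) (hjn : j ≤ n)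
    (hx : x ∈ Set.Ioo ((j : ℝ) - 1) j) :
    x ^ (α - 1) * ((n : ℝ) - x) ^ (-α) / (j : ℝ) ^ (1 - α) ≤
      ((n : ℝ) / 2) ^ (-α) * (x ^ (α - 1) * max x 1 ^ (α - 1)) +
        ((n : ℝ) / 2) ^ (2 * α - 2) * ((n : ℝ) - x) ^ (-α) := by
  obtain ⟨hjx, hxj⟩ := hx
  have hj1 : (1 : ℝ) ≤ j := by exact_mod_cast hj
  have hjn' : (j : ℝ) ≤ n := by exact_mod_cast hjn
  have hx0 : 0 < x := by linarith
  set w := x ^ (α - 1) * max x 1 ^ (α - 1)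
  set v := ((n : ℝ) - x) ^ (-α)
  have hw : 0 ≤ w := by positivity
  have hv : 0 ≤ v := rpow_nonneg (by linarith) _
  have hweight : x ^ (α - 1) * v / (j : ℝ) ^ (1 - α) ≤ w * v := by
    rw [div_eq_mul_inv, ← rpow_neg (Nat.cast_nonneg j), neg_sub, mul_right_comm]
    refine mul_le_mul_of_nonneg_right (mul_le_mul_of_nonneg_left ?_ (rpow_nonneg hx0.le _)) hv
    exact rpow_le_rpow_of_nonpos (by positivity) (max_le hxj.le hj1) (by linarith)
  refine hweight.trans ?_
  rcases le_total x (n / 2) with hxn | hxn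
  · have : v ≤ ((n : ℝ) / 2) ^ (-α) :=
      rpow_le_rpow_of_nonpos (by linarith) (by linarith) (by linarith)
    nlinarith [mul_nonneg (rpow_nonneg (by linarith : (0 : ℝ) ≤ n / 2) (2 * α - 2)) hv]
  · have : w ≤ ((n : ℝ) / 2) ^ (2 * α - 2) := calc
      w ≤ x ^ (α - 1) * x ^ (α - 1) := mul_le_mul_of_nonneg_left
        (rpow_le_rpow_of_nonpos hx0 (le_max_left x 1) (by linarith)) (by positivity)
      _ = x ^ (2 * α - 2) := by rw [← rpow_add hx0]; ring_nf
      _ ≤ ((n : ℝ) / 2) ^ (2 * α - 2) := rpow_le_rpow_of_nonpos (by linarith) hxn (by linarith)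
    nlinarith [mul_nonneg (rpow_nonneg (by linarith : (0 : ℝ) ≤ n / 2) (-α)) hw]

theorem sum_bCoeff_div_le_integral (n : ℕ) :
    ∑ j ∈ Icc 1 n, bCoeff α j n / (j : ℝ) ^ (1 - α) ≤
      ∫ x in (0 : ℝ)..n, ((n : ℝ) / 2) ^ (-α) * (x ^ (α - 1) * max x 1 ^ (α - 1)) +
        ((n : ℝ) / 2) ^ (2 * α - 2) * ((n : ℝ) - x) ^ (-α) := by
  have hH : IntervalIntegrable (fun x : ℝ => ((n : ℝ) / 2) ^ (-α) *
      (x ^ (α - 1) * max x 1 ^ (α - 1)) + ((n : ℝ) / 2) ^ (2 * α - 2) * ((n : ℝ) - x) ^ (-α))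
      volume 0 n :=
    ((intervalIntegrable_rpow_mul_max_one_rpow h0 _ _).const_mul _).add
      ((intervalIntegrable_sub_rpow (by linarith) _ _ _).const_mul _)
  have hsub {j : ℕ} (hj : 1 ≤ j) (hjn : j ≤ n) :
      Set.uIcc ((j : ℝ) - 1) j ⊆ Set.uIcc 0 (n : ℝ) := by
    have hj' : (1 : ℝ) ≤ j := by exact_mod_cast hj
    have hjn' : (j : ℝ) ≤ n := by exact_mod_cast hjn
    apply Set.uIcc_subset_uIcc <;> rw [Set.mem_uIcc] <;> left <;> constructor <;> linarith
  calc ∑ j ∈ Icc 1 n, bCoeff α j n / (j : ℝ) ^ (1 - α)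
      ≤ ∑ j ∈ Icc 1 n, ∫ x in ((j : ℝ) - 1)..j, ((n : ℝ) / 2) ^ (-α) *
          (x ^ (α - 1) * max x 1 ^ (α - 1)) +
            ((n : ℝ) / 2) ^ (2 * α - 2) * ((n : ℝ) - x) ^ (-α) := by
        refine sum_le_sum fun j hj => ?_
        obtain ⟨hj, hjn⟩ := mem_Icc.1 hj
        have hjn' : (j : ℝ) ≤ n := by exact_mod_cast hjn
        rw [bCoeff, ← intervalIntegral.integral_div]
        refine integral_mono_on_Ioo_of_nonneg (by linarith) (hH.mono_set (hsub hj hjn))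
          (fun x ⟨hx1, hx2⟩ => ?_) fun x hx => rpow_mul_sub_rpow_div_le h0 h1 hj hjn hx
        have hj' : (1 : ℝ) ≤ j := by exact_mod_cast hj
        exact div_nonneg (mul_nonneg (rpow_nonneg (by linarith) _) (rpow_nonneg (by linarith) _))
          (rpow_nonneg (by linarith) _)
    _ = _ := by
        rw [← Ico_add_one_right_eq_Icc]
        simpa using sum_integral_adjacent_intervals_Ico (a := fun k : ℕ => (k : ℝ) - 1)
          (by omega : 1 ≤ n + 1) fun k hk =>
            hH.mono_set (by simpa using hsub hk.1 (Nat.lt_succ_iff.1 hk.2))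

theorem sum_bCoeff_le {n : ℕ} (hn : 1 ≤ n) :
    ∑ j ∈ Icc 1 n, bCoeff α j n / (j : ℝ) ^ (1 - α) ≤
      (2 / α + 2 + 4 / (1 - α)) *
        ((n : ℝ) ^ (-α) * (1 + ∫ x in (1 : ℝ)..n, x ^ (2 * α - 2))) := by
  have hn' : (1 : ℝ) ≤ n := by exact_mod_cast hn
  have hn0 : (0 : ℝ) < n := by linarith
  set I := ∫ x in (1 : ℝ)..n, x ^ (2 * α - 2)
  have hI : 0 ≤ I := integral_nonneg hn' fun x hx => rpow_nonneg (by linarith [hx.1]) _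
  have hy : 0 ≤ (n : ℝ) ^ (-α) := by positivity
  have hleft : ((n : ℝ) / 2) ^ (-α) ≤ 2 * (n : ℝ) ^ (-α) := by
    rw [div_rpow hn0.le zero_le_two, rpow_neg zero_le_two, div_inv_eq_mul, mul_comm]
    gcongr
    calc (2 : ℝ) ^ α ≤ 2 ^ (1 : ℝ) := rpow_le_rpow_of_exponent_le one_le_two h1.le
      _ = 2 := rpow_one 2
  have hright : ((n : ℝ) / 2) ^ (2 * α - 2) * (n : ℝ) ^ (1 - α) ≤ 4 * (n : ℝ) ^ (α - 1) := by
    rw [div_rpow hn0.le zero_le_two, div_mul_eq_mul_div, ← rpow_add hn0, div_eq_mul_inv,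
      ← rpow_neg zero_le_two, mul_comm, show 2 * α - 2 + (1 - α) = α - 1 by ring]
    gcongr
    calc (2 : ℝ) ^ (-(2 * α - 2)) ≤ 2 ^ (2 : ℝ) :=
        rpow_le_rpow_of_exponent_le one_le_two (by linarith)
      _ = 4 := by norm_num
  have htail : (n : ℝ) ^ (α - 1) ≤ (n : ℝ) ^ (-α) * (1 + I) := by
    rw [show α - 1 = -α + (2 * α - 2 + 1) by ring, rpow_add hn0]
    exact mul_le_mul_of_nonneg_left (rpow_add_one_le_one_add_integral (by linarith) hn') hy
  calc ∑ j ∈ Icc 1 n, bCoeff α j n / (j : ℝ) ^ (1 - α)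
      ≤ ((n : ℝ) / 2) ^ (-α) * (1 / α + I) +
          ((n : ℝ) / 2) ^ (2 * α - 2) * (n : ℝ) ^ (1 - α) / (1 - α) := by
        refine (sum_bCoeff_div_le_integral h0 h1 n).trans_eq ?_
        rw [intervalIntegral.integral_add
            ((intervalIntegrable_rpow_mul_max_one_rpow h0 _ _).const_mul _)
            ((intervalIntegrable_sub_rpow (by linarith) _ _ _).const_mul _),
          intervalIntegral.integral_const_mul, intervalIntegral.integral_const_mul,
          integral_rpow_mul_max_one_rpow h0 hn',
          integral_sub_rpow (by linarith), neg_add_eq_sub, mul_div_assoc]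
    _ ≤ 2 * (n : ℝ) ^ (-α) * (1 / α + I) + 4 * (n : ℝ) ^ (α - 1) / (1 - α) := by
        gcongr
    _ ≤ _ := by
        have hfirst :
            2 * (n : ℝ) ^ (-α) * (1 / α + I) ≤ (2 / α + 2) * ((n : ℝ) ^ (-α) * (1 + I)) := by
          have hexpand : (2 / α + 2) * ((n : ℝ) ^ (-α) * (1 + I)) =
              2 * (n : ℝ) ^ (-α) * (1 / α + I) + 2 * ((n : ℝ) ^ (-α) * I * (1 / α)) +
                2 * (n : ℝ) ^ (-α) := by ring
          nlinarith [mul_nonneg (mul_nonneg hy hI) (one_div_pos.2 h0).le]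
        have hsecond :
            4 * (n : ℝ) ^ (α - 1) / (1 - α) ≤ 4 / (1 - α) * ((n : ℝ) ^ (-α) * (1 + I)) := by
          rw [mul_div_right_comm]
          gcongr
        linarith

end

theorem exists_rpow_neg_mul_one_add_integral_le_eta (α : ℝ) :
    ∃ c > 0, ∀ n : ℕ, 1 ≤ n →
      (n : ℝ) ^ (-α) * (1 + ∫ x in (1 : ℝ)..n, x ^ (2 * α - 2)) ≤ c * eta α n := by
  rcases lt_trichotomy α (1 / 2) with hα | rfl | hα
  · have hc : 0 < 1 - 2 * α := by linarith
    refine ⟨1 + 1 / (1 - 2 * α), by positivity, fun n hn => ?_⟩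
    have hI : ∫ x in (1 : ℝ)..n, x ^ (2 * α - 2) ≤ 1 / (1 - 2 * α) := by
      convert integral_one_rpow_le_of_lt_neg_one (by linarith : 2 * α - 2 < -1)
        (Nat.one_le_cast.2 hn) using 1
      rw [← neg_div_neg_eq]
      ring_nf
    rw [eta, if_pos hα, mul_comm (1 + 1 / (1 - 2 * α))]
    exact mul_le_mul_of_nonneg_left (by linarith) (by positivity)
  · refine ⟨1 + 1 / log 2, by positivity, fun n hn => ?_⟩
    have hn' : (1 : ℝ) ≤ n := Nat.one_le_cast.2 hn
    have hy : 0 ≤ (n : ℝ) ^ (-(1 / 2) : ℝ) := by positivity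
    have hlog2 : 0 < log 2 := log_pos one_lt_two
    have hlog : log 2 ≤ log (n + 1) := log_le_log two_pos (by linarith)
    have hI : ∫ x in (1 : ℝ)..n, x ^ (2 * (1 / 2) - 2 : ℝ) ≤ log (n + 1) := by
      rw [show (2 * (1 / 2) - 2 : ℝ) = -1 by norm_num, integral_one_rpow_neg_one hn']
      exact log_le_log (by linarith) (by linarith)
    have hone : 1 ≤ 1 / log 2 * log (n + 1) := by
      rw [one_div_mul_eq_div]
      exact (one_le_div hlog2).2 hlog
    rw [eta, if_neg (lt_irrefl _), if_pos rfl, mul_comm (1 + 1 / log 2), mul_assoc]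
    exact mul_le_mul_of_nonneg_left (by nlinarith) hy
  · have hc : 0 < 2 * α - 1 := by linarith
    refine ⟨1 + 1 / (2 * α - 1), by positivity, fun n hn => ?_⟩
    have hn' : (1 : ℝ) ≤ n := Nat.one_le_cast.2 hn
    have hn0 : (0 : ℝ) < n := by linarith
    have hI := integral_one_rpow_le_of_neg_one_lt (by linarith : -1 < 2 * α - 2) hn'
    have hle : (n : ℝ) ^ (-α) ≤ (n : ℝ) ^ (α - 1) :=
      rpow_le_rpow_of_exponent_le hn' (by linarith)
    have hexp : (n : ℝ) ^ (-α) * (n : ℝ) ^ (2 * α - 2 + 1) = (n : ℝ) ^ (α - 1) := by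
      rw [← rpow_add hn0]; ring_nf
    rw [eta, if_neg hα.not_gt, if_neg hα.ne', neg_sub]
    calc (n : ℝ) ^ (-α) * (1 + ∫ x in (1 : ℝ)..n, x ^ (2 * α - 2))
        ≤ (n : ℝ) ^ (-α) * (1 + (n : ℝ) ^ (2 * α - 2 + 1) / (2 * α - 2 + 1)) := by gcongr
      _ = (n : ℝ) ^ (-α) + 1 / (2 * α - 1) * (n : ℝ) ^ (α - 1) := by rw [← hexp]; ring_nf
      _ ≤ (1 + 1 / (2 * α - 1)) * (n : ℝ) ^ (α - 1) := by linarith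

theorem sum_bCoeff_bound (α : ℝ) (h0 : 0 < α) (h1 : α < 1) :
    ∃ C : ℝ, 0 < C ∧ ∀ n : ℕ, 1 ≤ n →
      ∑ j ∈ Finset.Icc 1 n, bCoeff α j n / (j : ℝ) ^ (1 - α) ≤ C * eta α n := by
  obtain ⟨c, hc, hη⟩ := exists_rpow_neg_mul_one_add_integral_le_eta α
  refine ⟨(2 / α + 2 + 4 / (1 - α)) * c, by positivity, fun n hn => ?_⟩
  calc ∑ j ∈ Finset.Icc 1 n, bCoeff α j n / (j : ℝ) ^ (1 - α)
      ≤ (2 / α + 2 + 4 / (1 - α)) *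
          ((n : ℝ) ^ (-α) * (1 + ∫ x in (1 : ℝ)..n, x ^ (2 * α - 2))) :=
        sum_bCoeff_le h0 h1 hn
    _ ≤ (2 / α + 2 + 4 / (1 - α)) * (c * eta α n) :=
        mul_le_mul_of_nonneg_left (hη n hn) (by positivity)
    _ = (2 / α + 2 + 4 / (1 - α)) * c * eta α n := by ring
end

section
/- For α ∈ (0,1), the m-th derivative of the function t ↦ E_α(t^α) on (0,∞) equals t^{-m} E_{α,1-m}(t^α) for every integer m ≥ 1, where E_{α,β}(z) = ∑_{n≥0} z^n / Γ(αn + β) is the generalized Mittag–Leffler function (terms with nonpositive Γ-argument interpreted via 1/Γ extended by 0 at nonpositive integers). -/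
open Real

/-- The generalized Mittag–Leffler function `E_{α,β}(z) = ∑ z^n / Γ(αn+β)`, where `1/Γ` is
interpreted as `0` at nonpositive integers (Mathlib's `Real.Gamma` vanishes there). -/
noncomputable def mittagLeffler (α β : ℝ) (z : ℝ) : ℝ :=
  ∑' n : ℕ, z ^ n / Real.Gamma (α * n + β)

open Filter Set Topology

/-! For `t > 0`, `t ^ γ * E_{α,γ+1}(t ^ α) = ∑ t ^ (αn+γ) / Γ(αn+γ+1)`, and
`d/dt (t ^ s / Γ(s+1)) = t ^ (s-1) / Γ(s)` for every real `s` (both sides vanish when `1/Γ(s)`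
does). Differentiating termwise therefore lowers `γ` by one, so the `m`-th derivative of the
case `γ = 0` is the case `γ = -m`. Termwise differentiation is legitimate because the series
`∑ C^n / Γ(αn+β)` converges absolutely by the ratio test: log-convexity of `Γ` gives
`Γ(x) (x-1)^α ≤ Γ(x+α)`. -/

theorem Real.Gamma_mul_rpow_le_Gamma_add {x α : ℝ} (hx : 1 < x) (hα : 0 < α) :
    Gamma x * (x - 1) ^ α ≤ Gamma (x + α) := by
  obtain ⟨b, hb, hb1⟩ : ∃ b : ℝ, 0 < b ∧ b * (1 + α) = 1 :=
    ⟨(1 + α)⁻¹, by positivity, inv_mul_cancel₀ (by positivity)⟩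
  have hx1 : 0 < x - 1 := sub_pos.2 hx
  have hconv := convexOn_log_Gamma.2 (mem_Ioi.2 hx1) (mem_Ioi.2 (by linarith : 0 < x + α))
    (by positivity : 0 ≤ α * b) hb.le (by linear_combination hb1)
  have hmid : (α * b) • (x - 1) + b • (x + α) = x := by
    simp only [smul_eq_mul]; linear_combination x * hb1
  rw [hmid] at hconv
  simp only [Function.comp_apply, smul_eq_mul] at hconv
  have hrec : log (Gamma x) = log (x - 1) + log (Gamma (x - 1)) := by
    rw [← log_mul hx1.ne' (Gamma_pos_of_pos hx1).ne', ← Gamma_add_one hx1.ne', sub_add_cancel]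
  have hlog : log (Gamma x) + α * log (x - 1) ≤ log (Gamma (x + α)) := by
    refine le_of_mul_le_mul_left ?_ hb
    linear_combination hconv - (α * b) * hrec + log (Gamma x) * hb1
  calc Gamma x * (x - 1) ^ α = exp (log (Gamma x) + α * log (x - 1)) := by
        rw [exp_add, exp_log (Gamma_pos_of_pos (by linarith)), rpow_def_of_pos hx1, mul_comm α]
    _ ≤ exp (log (Gamma (x + α))) := exp_le_exp.2 hlog
    _ = Gamma (x + α) := exp_log (Gamma_pos_of_pos (by linarith))

theorem Real.tendsto_Gamma_div_Gamma_add_atTop {α : ℝ} (hα : 0 < α) :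
    Tendsto (fun x => Gamma x / Gamma (x + α)) atTop (𝓝 0) := by
  have hlim : Tendsto (fun x : ℝ => (x - 1) ^ (-α)) atTop (𝓝 0) :=
    (tendsto_rpow_neg_atTop hα).comp (tendsto_atTop_add_const_right _ (-1) tendsto_id)
  refine tendsto_of_tendsto_of_tendsto_of_le_of_le' tendsto_const_nhds hlim ?_ ?_
  · filter_upwards [eventually_gt_atTop 0] with x hx
    exact div_nonneg (Gamma_pos_of_pos hx).le (Gamma_pos_of_pos (by linarith)).le
  · filter_upwards [eventually_gt_atTop 1] with x hx
    have hx1 : 0 < x - 1 := sub_pos.2 hx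
    rw [div_le_iff₀ (Gamma_pos_of_pos (by linarith)), rpow_neg hx1.le, inv_mul_eq_div,
      le_div_iff₀ (rpow_pos_of_pos hx1 α)]
    exact Gamma_mul_rpow_le_Gamma_add hx hα

theorem Real.summable_norm_pow_div_Gamma {α : ℝ} (hα : 0 < α) (β z : ℝ) :
    Summable fun n : ℕ => ‖z ^ n / Gamma (α * n + β)‖ := by
  have harg : Tendsto (fun n : ℕ => α * n + β) atTop atTop :=
    tendsto_atTop_add_const_right _ β (tendsto_natCast_atTop_atTop.const_mul_atTop hα)
  have hratio : ∀ᶠ n : ℕ in atTop,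
      ‖z‖ * (Gamma (α * n + β) / Gamma (α * n + β + α)) < 1 / 2 :=
    (((tendsto_Gamma_div_Gamma_add_atTop hα).const_mul ‖z‖).comp harg).eventually
      (gt_mem_nhds (by norm_num))
  refine summable_of_ratio_norm_eventually_le (r := 1 / 2) (by norm_num) ?_
  filter_upwards [hratio, harg.eventually (eventually_gt_atTop 0)] with n hr hpos
  have hshift : α * ((n + 1 : ℕ) : ℝ) + β = α * n + β + α := by push_cast; ring
  have hG := Gamma_pos_of_pos hpos
  have hG' := Gamma_pos_of_pos (add_pos hpos hα)
  simp only [norm_norm, norm_div, norm_pow, hshift, Real.norm_of_nonneg hG.le,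
    Real.norm_of_nonneg hG'.le]
  calc ‖z‖ ^ (n + 1) / Gamma (α * n + β + α)
      = ‖z‖ ^ n / Gamma (α * n + β) * (‖z‖ * (Gamma (α * n + β) / Gamma (α * n + β + α))) := by
        field_simp; ring
    _ ≤ ‖z‖ ^ n / Gamma (α * n + β) * (1 / 2) := by gcongr
    _ = 1 / 2 * (‖z‖ ^ n / Gamma (α * n + β)) := mul_comm _ _

theorem Real.div_Gamma_add_one (s : ℝ) : s / Gamma (s + 1) = 1 / Gamma s := by
  rcases eq_or_ne s 0 with rfl | hs
  · simp
  · rw [Gamma_add_one hs, div_mul_cancel_left₀ hs, one_div]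

theorem Real.hasDerivAt_rpow_div_Gamma {t : ℝ} (ht : t ≠ 0) (s : ℝ) :
    HasDerivAt (fun y => y ^ s / Gamma (s + 1)) (t ^ (s - 1) / Gamma s) t := by
  refine ((hasDerivAt_rpow_const (p := s) (Or.inl ht)).div_const (Gamma (s + 1))).congr_deriv ?_
  rw [mul_comm, mul_div_assoc, div_Gamma_add_one, mul_one_div]

theorem Real.rpow_le_rpow_add_rpow {a b y : ℝ} (ha : 0 < a) (hay : a ≤ y) (hyb : y ≤ b) (p : ℝ) :
    y ^ p ≤ a ^ p + b ^ p := by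
  rcases le_total 0 p with hp | hp
  · linarith [rpow_le_rpow (ha.le.trans hay) hyb hp, rpow_nonneg ha.le p]
  · linarith [rpow_le_rpow_of_nonpos ha hay hp, rpow_nonneg (ha.le.trans (hay.trans hyb)) p]

noncomputable def rpowMittagLeffler (α γ t : ℝ) : ℝ :=
  ∑' n : ℕ, t ^ (α * n + γ) / Gamma (α * n + γ + 1)

theorem rpowMittagLeffler_eq {t : ℝ} (ht : 0 < t) (α γ : ℝ) :
    rpowMittagLeffler α γ t = t ^ γ * mittagLeffler α (γ + 1) (t ^ α) := by
  rw [rpowMittagLeffler, mittagLeffler, ← tsum_mul_left]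
  congr 1 with n
  rw [rpow_add ht, rpow_mul_natCast ht.le, add_assoc]
  ring

theorem summable_rpow_div_Gamma {α : ℝ} (hα : 0 < α) (γ : ℝ) {t : ℝ} (ht : 0 < t) :
    Summable fun n : ℕ => t ^ (α * n + γ) / Gamma (α * n + γ + 1) := by
  refine ((summable_norm_pow_div_Gamma hα (γ + 1) (t ^ α)).of_norm.mul_left (t ^ γ)).congr
    fun n => ?_
  rw [rpow_add ht, rpow_mul_natCast ht.le, add_assoc]
  ring

theorem hasDerivAt_rpowMittagLeffler {α : ℝ} (hα : 0 < α) (γ : ℝ) {t : ℝ} (ht : 0 < t) :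
    HasDerivAt (rpowMittagLeffler α γ) (rpowMittagLeffler α (γ - 1) t) t := by
  set M := (t / 2) ^ (γ - 1) + (2 * t) ^ (γ - 1)
  have hmem : t ∈ Ioo (t / 2) (2 * t) := ⟨by linarith, by linarith⟩
  have hderiv : ∀ (n : ℕ), ∀ y ∈ Ioo (t / 2) (2 * t),
      HasDerivAt (fun y => y ^ (α * n + γ) / Gamma (α * n + γ + 1))
        (y ^ (α * n + γ - 1) / Gamma (α * n + γ)) y :=
    fun n y hy => hasDerivAt_rpow_div_Gamma (by linarith [hy.1]) _
  have hbound : ∀ (n : ℕ), ∀ y ∈ Ioo (t / 2) (2 * t),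
      ‖y ^ (α * n + γ - 1) / Gamma (α * n + γ)‖ ≤
        M * ‖((2 * t) ^ α) ^ n / Gamma (α * n + γ)‖ := by
    intro n y ⟨hy1, hy2⟩
    have hy : 0 < y := by linarith
    rw [norm_div, norm_div, mul_div_assoc']
    refine div_le_div_of_nonneg_right ?_ (norm_nonneg _)
    rw [norm_pow, norm_of_nonneg (rpow_nonneg hy.le _), norm_of_nonneg (by positivity),
      add_sub_assoc, rpow_add hy, rpow_mul_natCast hy.le, mul_comm M]
    gcongr
    exact rpow_le_rpow_add_rpow (by linarith) hy1.le hy2.le _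
  have H := hasDerivAt_tsum_of_isPreconnected
    ((summable_norm_pow_div_Gamma hα γ ((2 * t) ^ α)).mul_left M)
    (isOpen_Ioo : IsOpen (Ioo (t / 2) (2 * t))) isPreconnected_Ioo hderiv hbound hmem
    (summable_rpow_div_Gamma hα γ ht) hmem
  refine H.congr_deriv (tsum_congr fun n => ?_)
  ring_nf

theorem iteratedDeriv_rpowMittagLeffler {α : ℝ} (hα : 0 < α) (γ : ℝ) (m : ℕ) {t : ℝ}
    (ht : 0 < t) : iteratedDeriv m (rpowMittagLeffler α γ) t = rpowMittagLeffler α (γ - m) t := by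
  induction m generalizing t with
  | zero => simp
  | succ m ih =>
    have hloc : iteratedDeriv m (rpowMittagLeffler α γ) =ᶠ[𝓝 t] rpowMittagLeffler α (γ - m) :=
      eventually_of_mem (Ioi_mem_nhds ht) fun s hs => ih hs
    rw [iteratedDeriv_succ, hloc.deriv_eq, (hasDerivAt_rpowMittagLeffler hα _ ht).deriv,
      Nat.cast_succ, sub_add_eq_sub_sub]

theorem iteratedDeriv_mittagLeffler_general (α : ℝ) (h0 : 0 < α) (m : ℕ) (t : ℝ) (ht : 0 < t) :
    iteratedDeriv m (fun s : ℝ => mittagLeffler α 1 (s ^ α)) t =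
      t ^ (-(m : ℝ)) * mittagLeffler α (1 - m) (t ^ α) := by
  have hloc : (fun s : ℝ => mittagLeffler α 1 (s ^ α)) =ᶠ[𝓝 t] rpowMittagLeffler α 0 :=
    eventually_of_mem (Ioi_mem_nhds ht) fun s hs => by simp [rpowMittagLeffler_eq hs]
  rw [hloc.iteratedDeriv_eq, iteratedDeriv_rpowMittagLeffler h0 0 m ht, rpowMittagLeffler_eq ht,
    zero_sub, neg_add_eq_sub]

theorem iteratedDeriv_mittagLeffler (α : ℝ) (h0 : 0 < α) (h1 : α < 1) (m : ℕ) (hm : 1 ≤ m)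
    (t : ℝ) (ht : 0 < t) :
    iteratedDeriv m (fun s : ℝ => mittagLeffler α 1 (s ^ α)) t =
      t ^ (-(m : ℝ)) * mittagLeffler α (1 - m) (t ^ α) :=
  iteratedDeriv_mittagLeffler_general α h0 m t ht
end

section
/- For α ∈ (0,1) and n ≥ 1, define a_{0n} = −(α/Γ(1−α)) b_{1n}, a_{jn} = (α/Γ(1−α)) ( b_{jn}/(j^α−(j−1)^α) − b_{j+1,n}/((j+1)^α − j^α) ) for 1 ≤ j ≤ n−1, and a_{nn} = (α/Γ(1−α)) b_{nn}/(n^α−(n−1)^α), where b_{jn} = ∫_{j−1}^{j} x^{α−1}(n−x)^{−α} dx. Then a_{0n} < 0, a_{nn} > 0, and a_{jn} ≤ 0 for 1 ≤ j ≤ n−1. -/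
open Real

/-- The coefficients `a_{jn}` of the finite difference scheme. -/
noncomputable def aCoeff (α : ℝ) (j n : ℕ) : ℝ :=
  if j = 0 then -(α / Real.Gamma (1 - α)) * bCoeff α 1 n
  else if j = n then
    (α / Real.Gamma (1 - α)) * bCoeff α n n / ((n : ℝ) ^ α - ((n : ℝ) - 1) ^ α)
  else (α / Real.Gamma (1 - α)) *
    (bCoeff α j n / ((j : ℝ) ^ α - ((j : ℝ) - 1) ^ α) -
      bCoeff α (j + 1) n / (((j : ℝ) + 1) ^ α - (j : ℝ) ^ α))

/-!
Since `j ^ α - (j - 1) ^ α = α ∫_{j-1}^{j} x^{α-1} dx`, the quotient `b_{jn} / (j^α - (j-1)^α)`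
is `1/α` times a weighted average of `(n - x)^{-α}` over `[j - 1, j]`. As `(n - x)^{-α}`
increases in `x`, this average lies between `(n - j + 1)^{-α}` and `(n - j)^{-α}`; so the
quotients increase in `j`, which is the sign of `a_{jn}` for `1 ≤ j ≤ n - 1`. The other two
signs are positivity of the integrals `b_{1n}` and `b_{nn}`.
-/

open MeasureTheory Set intervalIntegral

section RpowWeight

variable {p q c a b : ℝ}

theorem intervalIntegrable_rpow_mul_sub_rpow (hp : -1 < p) (hq : -1 < q)
    (ha : 0 ≤ a) (hab : a ≤ b) (hbc : b ≤ c) :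
    IntervalIntegrable (fun x => x ^ p * (c - x) ^ q) volume a b := by
  rcases hab.eq_or_lt with rfl | hab
  · exact IntervalIntegrable.refl
  -- Split at an interior point, so that only one of the two factors is singular on each half.
  obtain ⟨m, ham, hmb, hm0, hmc⟩ : ∃ m, a ≤ m ∧ m ≤ b ∧ 0 < m ∧ m < c :=
    ⟨(a + b) / 2, by linarith, by linarith, by linarith, by linarith⟩
  have hleft : IntervalIntegrable (fun x => x ^ p * (c - x) ^ q) volume a m := by
    refine (intervalIntegrable_rpow' hp).mul_continuousOn
      ((continuous_const.sub continuous_id).continuousOn.rpow_const fun x hx => Or.inl ?_)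
    rw [uIcc_of_le ham] at hx
    exact (sub_pos.2 (by linarith [hx.2] : x < c)).ne'
  have hright : IntervalIntegrable (fun x => x ^ p * (c - x) ^ q) volume m b := by
    have hsub := (intervalIntegrable_rpow' (a := c - m) (b := c - b) hq).comp_sub_left c
    simp only [sub_sub_cancel] at hsub
    refine hsub.continuousOn_mul (continuousOn_id.rpow_const fun x hx => Or.inl ?_)
    rw [uIcc_of_le hmb] at hx
    exact (show 0 < x by linarith [hx.1]).ne'
  exact hleft.trans hright

theorem integral_rpow_pos {r : ℝ} (hr : -1 < r) (ha : 0 ≤ a) (hab : a < b) :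
    0 < ∫ x in a..b, x ^ r :=
  intervalIntegral_pos_of_pos_on (intervalIntegrable_rpow' hr)
    (fun _ hx => rpow_pos_of_pos (ha.trans_lt hx.1) _) hab

variable (hp : -1 < p) (hq0 : 0 ≤ q) (hq1 : q < 1) (ha : 0 ≤ a) (hab : a ≤ b)
include hp hq0 hq1 ha hab

theorem sub_rpow_neg_mul_integral_le (hbc : b ≤ c) :
    (c - a) ^ (-q) * ∫ x in a..b, x ^ p ≤ ∫ x in a..b, x ^ p * (c - x) ^ (-q) := by
  rw [← intervalIntegral.integral_const_mul]
  refine integral_mono_on_of_le_Ioo hab ((intervalIntegrable_rpow' hp).const_mul _)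
    (intervalIntegrable_rpow_mul_sub_rpow hp (by linarith) ha hab hbc) fun x hx => ?_
  rw [mul_comm]
  refine mul_le_mul_of_nonneg_left ?_ (rpow_nonneg (by linarith [hx.1]) _)
  exact rpow_le_rpow_of_nonpos (by linarith [hx.2]) (by linarith [hx.1]) (by linarith)

theorem integral_le_sub_rpow_neg_mul (hbc : b < c) :
    ∫ x in a..b, x ^ p * (c - x) ^ (-q) ≤ (c - b) ^ (-q) * ∫ x in a..b, x ^ p := by
  rw [← intervalIntegral.integral_const_mul]
  refine integral_mono_on hab
    (intervalIntegrable_rpow_mul_sub_rpow hp (by linarith) ha hab hbc.le)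
    ((intervalIntegrable_rpow' hp).const_mul _) fun x hx => ?_
  rw [mul_comm (_ ^ (-q))]
  refine mul_le_mul_of_nonneg_left ?_ (rpow_nonneg (by linarith [hx.1]) _)
  exact rpow_le_rpow_of_nonpos (by linarith) (by linarith [hx.2]) (by linarith)

end RpowWeight

section Coefficients

variable {α : ℝ} (h0 : 0 < α)
include h0

theorem rpow_sub_rpow_eq_mul_integral (a b : ℝ) :
    b ^ α - a ^ α = α * ∫ x in a..b, x ^ (α - 1) := by
  rw [integral_rpow (Or.inl (by linarith)), sub_add_cancel]
  field_simp

variable (h1 : α < 1)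
include h1

theorem bCoeff_pos {j n : ℕ} (hj : 1 ≤ j) (hjn : j ≤ n) : 0 < bCoeff α j n := by
  have hj' : (1 : ℝ) ≤ j := by exact_mod_cast hj
  have hjn' : (j : ℝ) ≤ n := by exact_mod_cast hjn
  refine intervalIntegral_pos_of_pos_on (intervalIntegrable_rpow_mul_sub_rpow (by linarith)
    (by linarith) (by linarith) (by linarith) hjn') (fun x hx => ?_) (by linarith)
  exact mul_pos (rpow_pos_of_pos (by linarith [hx.1]) _)
    (rpow_pos_of_pos (by linarith [hx.2]) _)

theorem rpow_neg_div_le_bCoeff_div {j n : ℕ} (hj : 1 ≤ j) (hjn : j ≤ n) :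
    ((n : ℝ) - j + 1) ^ (-α) / α ≤
      bCoeff α j n / ((j : ℝ) ^ α - ((j : ℝ) - 1) ^ α) := by
  have hj' : (1 : ℝ) ≤ j := by exact_mod_cast hj
  have hjn' : (j : ℝ) ≤ n := by exact_mod_cast hjn
  have hI := integral_rpow_pos (r := α - 1) (by linarith) (by linarith : (0 : ℝ) ≤ j - 1)
    (sub_one_lt (j : ℝ))
  have hlow := sub_rpow_neg_mul_integral_le (p := α - 1) (q := α) (c := n) (by linarith) h0.le h1
    (by linarith) (sub_one_lt (j : ℝ)).le hjn'
  rw [rpow_sub_rpow_eq_mul_integral h0, le_div_iff₀ (by positivity), bCoeff]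
  calc _ = ((n : ℝ) - (j - 1)) ^ (-α) * ∫ x in ((j : ℝ) - 1)..(j : ℝ), x ^ (α - 1) := by
          rw [show (n : ℝ) - (j - 1) = n - j + 1 by ring]; field_simp
    _ ≤ _ := hlow

theorem bCoeff_div_le_rpow_neg_div {j n : ℕ} (hj : 1 ≤ j) (hjn : j < n) :
    bCoeff α j n / ((j : ℝ) ^ α - ((j : ℝ) - 1) ^ α) ≤ ((n : ℝ) - j) ^ (-α) / α := by
  have hj' : (1 : ℝ) ≤ j := by exact_mod_cast hj
  have hjn' : (j : ℝ) < n := by exact_mod_cast hjn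
  have hI := integral_rpow_pos (r := α - 1) (by linarith) (by linarith : (0 : ℝ) ≤ j - 1)
    (sub_one_lt (j : ℝ))
  have hup := integral_le_sub_rpow_neg_mul (p := α - 1) (q := α) (c := n) (by linarith) h0.le h1
    (by linarith) (sub_one_lt (j : ℝ)).le hjn'
  rw [rpow_sub_rpow_eq_mul_integral h0, div_le_iff₀ (by positivity), bCoeff]
  calc _ ≤ _ := hup
    _ = _ := by field_simp

end Coefficients

theorem aCoeff_signs (α : ℝ) (h0 : 0 < α) (h1 : α < 1) (n : ℕ) (hn : 1 ≤ n) :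
    aCoeff α 0 n < 0 ∧ 0 < aCoeff α n n ∧
      ∀ j : ℕ, 1 ≤ j → j ≤ n - 1 → aCoeff α j n ≤ 0 := by
  have hc : 0 < α / Gamma (1 - α) := div_pos h0 (Gamma_pos_of_pos (by linarith))
  refine ⟨?_, ?_, fun j hj hjn => ?_⟩
  · simpa [aCoeff] using mul_pos hc (bCoeff_pos h0 h1 le_rfl hn)
  · have hn' : (1 : ℝ) ≤ n := by exact_mod_cast hn
    rw [aCoeff, if_neg (by omega), if_pos rfl]
    exact div_pos (mul_pos hc (bCoeff_pos h0 h1 hn le_rfl))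
      (sub_pos.2 (rpow_lt_rpow (by linarith) (by linarith) h0))
  · rw [aCoeff, if_neg (by omega), if_neg (by omega)]
    refine mul_nonpos_of_nonneg_of_nonpos hc.le (sub_nonpos.2 ?_)
    have hlow := rpow_neg_div_le_bCoeff_div h0 h1 (by omega : 1 ≤ j + 1) (by omega : j + 1 ≤ n)
    push_cast at hlow
    rw [show (n : ℝ) - (j + 1) + 1 = n - j by ring, add_sub_cancel_right] at hlow
    exact (bCoeff_div_le_rpow_neg_div h0 h1 hj (by omega)).trans hlow
end

section
/- For α ∈ (0,1) and n ≥ 2, the coefficient a_{nn} = (α/Γ(1−α)) b_{nn}/(n^α−(n−1)^α) satisfies (1/Γ(2−α)) ((n−1)/n)^{1−α} ≤ a_{nn} ≤ (1/Γ(2−α)) (n/(n−1))^{1−α}. -/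
/-!
On `[n - 1, n]` the factor `x ^ (α - 1)` lies between `n ^ (α - 1)` and `(n - 1) ^ (α - 1)`.
Bounding it there in both `b_{nn}` (against the weight `(n - x) ^ (-α)`, of integral `1 / (1 - α)`)
and in `n ^ α - (n - 1) ^ α = α ∫_{n-1}^{n} x ^ (α - 1) dx` squeezes `a_{nn}` between the two
stated bounds, since `(1 - α) Γ(1 - α) = Γ(2 - α)`.
-/

open Real

open Set MeasureTheory

theorem integral_rpow_sub_one_mul_mem_Icc {α a b : ℝ} {g : ℝ → ℝ} (hα : α ≤ 1) (ha : 0 < a)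
    (hab : a ≤ b) (hg : ∀ x ∈ Icc a b, 0 ≤ g x) (hgi : IntervalIntegrable g volume a b) :
    ∫ x in a..b, x ^ (α - 1) * g x ∈
      Icc (b ^ (α - 1) * ∫ x in a..b, g x) (a ^ (α - 1) * ∫ x in a..b, g x) := by
  have hfg : IntervalIntegrable (fun x => x ^ (α - 1) * g x) volume a b := by
    refine hgi.continuousOn_mul (continuousOn_id.rpow_const fun x hx => Or.inl ?_)
    rw [uIcc_of_le hab] at hx
    exact (ha.trans_le hx.1).ne'
  rw [← intervalIntegral.integral_const_mul, ← intervalIntegral.integral_const_mul]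
  constructor
  · refine intervalIntegral.integral_mono_on hab (hgi.const_mul _) hfg fun x hx => ?_
    exact mul_le_mul_of_nonneg_right
      (rpow_le_rpow_of_nonpos (ha.trans_le hx.1) hx.2 (by linarith)) (hg x hx)
  · refine intervalIntegral.integral_mono_on hab hfg (hgi.const_mul _) fun x hx => ?_
    exact mul_le_mul_of_nonneg_right (rpow_le_rpow_of_nonpos ha hx.1 (by linarith)) (hg x hx)

theorem integral_sub_rpow_neg {α a b : ℝ} (hα : α < 1) :
    ∫ x in a..b, (b - x) ^ (-α) = (b - a) ^ (1 - α) / (1 - α) := by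
  rw [intervalIntegral.integral_comp_sub_left (fun x => x ^ (-α)) b,
    integral_rpow (Or.inl (by linarith)), sub_self, zero_rpow (by linarith)]
  ring_nf

theorem intervalIntegrable_sub_rpow_neg {α a b : ℝ} (hα : α < 1) :
    IntervalIntegrable (fun x => (b - x) ^ (-α)) volume a b := by
  simpa using ((intervalIntegral.intervalIntegrable_rpow' (a := b - b) (b := b - a)
    (r := -α) (by linarith)).comp_sub_left b).symm

theorem rpow_sub_rpow_eq_integral {α a b : ℝ} (hα : 0 < α) :
    b ^ α - a ^ α = α * ∫ x in a..b, x ^ (α - 1) := by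
  rw [integral_rpow (Or.inl (by linarith)), sub_add_cancel]
  field_simp

theorem div_rpow_one_sub {α a b : ℝ} (ha : 0 < a) (hb : 0 < b) :
    (a / b) ^ (1 - α) = b ^ (α - 1) / a ^ (α - 1) := by
  rw [div_rpow ha.le hb.le, show α - 1 = -(1 - α) by ring, rpow_neg ha.le, rpow_neg hb.le,
    inv_div_inv]

theorem aCoeff_self_eq {α : ℝ} (hα : 0 < α) {n : ℕ} (hn : n ≠ 0) :
    aCoeff α n n = bCoeff α n n / (Gamma (1 - α) * ∫ x in ((n : ℝ) - 1)..n, x ^ (α - 1)) := by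
  rw [aCoeff, if_neg hn, if_pos rfl, rpow_sub_rpow_eq_integral hα]
  field_simp

theorem bCoeff_self_mem_Icc {α : ℝ} (hα : α < 1) {n : ℕ} (hn : 1 < (n : ℝ)) :
    bCoeff α n n ∈ Icc ((n : ℝ) ^ (α - 1) / (1 - α)) (((n : ℝ) - 1) ^ (α - 1) / (1 - α)) := by
  have hab : (n : ℝ) - 1 ≤ n := by linarith
  have h := integral_rpow_sub_one_mul_mem_Icc hα.le (by linarith) hab
    (fun x hx => rpow_nonneg (sub_nonneg.2 hx.2) _) (intervalIntegrable_sub_rpow_neg hα)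
  rwa [integral_sub_rpow_neg hα, sub_sub_cancel, one_rpow, ← div_eq_mul_one_div,
    ← div_eq_mul_one_div] at h

theorem integral_rpow_sub_one_mem_Icc {α : ℝ} (hα : α ≤ 1) {N : ℝ} (hN : 1 < N) :
    ∫ x in (N - 1)..N, x ^ (α - 1) ∈ Icc (N ^ (α - 1)) ((N - 1) ^ (α - 1)) := by
  have h := integral_rpow_sub_one_mul_mem_Icc (g := fun _ => 1) hα (by linarith : 0 < N - 1)
    (by linarith) (fun _ _ => zero_le_one) intervalIntegrable_const
  simpa only [mul_one, intervalIntegral.integral_const, sub_sub_cancel, smul_eq_mul] using h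

theorem aCoeff_nn_bounds (α : ℝ) (h0 : 0 < α) (h1 : α < 1) (n : ℕ) (hn : 2 ≤ n) :
    (1 / Real.Gamma (2 - α)) * (((n : ℝ) - 1) / n) ^ (1 - α) ≤ aCoeff α n n ∧
    aCoeff α n n ≤ (1 / Real.Gamma (2 - α)) * ((n : ℝ) / ((n : ℝ) - 1)) ^ (1 - α) := by
  have hN : (2 : ℝ) ≤ n := by exact_mod_cast hn
  have hα : 0 < 1 - α := by linarith
  have hΓ : 0 < Gamma (1 - α) := Gamma_pos_of_pos hα
  have hΓ2 : Gamma (2 - α) = (1 - α) * Gamma (1 - α) := by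
    rw [show 2 - α = (1 - α) + 1 by ring, Gamma_add_one hα.ne']
  obtain ⟨hb_lo, hb_hi⟩ := bCoeff_self_mem_Icc h1 (n := n) (by linarith)
  obtain ⟨hI_lo, hI_hi⟩ := integral_rpow_sub_one_mem_Icc h1.le (N := n) (by linarith)
  have hpN : 0 < (n : ℝ) ^ (α - 1) := rpow_pos_of_pos (by linarith) _
  have hpN1 : 0 < ((n : ℝ) - 1) ^ (α - 1) := rpow_pos_of_pos (by linarith) _
  rw [aCoeff_self_eq h0 (by omega), hΓ2,
    div_rpow_one_sub (by linarith) (by linarith), div_rpow_one_sub (by linarith) (by linarith)]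
  constructor
  · calc _ = (n : ℝ) ^ (α - 1) / (1 - α) / (Gamma (1 - α) * ((n : ℝ) - 1) ^ (α - 1)) := by
          field_simp
      _ ≤ _ := div_le_div₀ ((div_pos hpN hα).le.trans hb_lo) hb_lo
          (mul_pos hΓ (hpN.trans_le hI_lo)) (mul_le_mul_of_nonneg_left hI_hi hΓ.le)
  · calc _ ≤ ((n : ℝ) - 1) ^ (α - 1) / (1 - α) / (Gamma (1 - α) * (n : ℝ) ^ (α - 1)) :=
          div_le_div₀ (div_pos hpN1 hα).le hb_hi (mul_pos hΓ hpN)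
            (mul_le_mul_of_nonneg_left hI_lo hΓ.le)
      _ = _ := by field_simp
end

section
/- For α ∈ (0,1) and n ≥ 2, the coefficient a_{0n} = (α/Γ(1−α)) b_{1n} satisfies 1/(Γ(1−α) n^α) ≤ a_{0n} ≤ 1/(Γ(1−α)(n−1)^α). -/
/-!
Since `(n - x)^{-α}` increases on `[0, 1]`, it lies between `n^{-α}` and `(n - 1)^{-α}` there,
and `∫₀¹ x^{α-1} dx = 1/α`; hence `n^{-α}/α ≤ b_{1n} ≤ (n-1)^{-α}/α`, and multiplying by
`α / Γ(1-α) > 0` gives the claim.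
-/

open Real Set

section WeightedIntegral

variable {α : ℝ} {f : ℝ → ℝ}

theorem integral_rpow_sub_one_zero_one (hα : 0 < α) :
    ∫ x in (0 : ℝ)..1, x ^ (α - 1) = 1 / α := by
  rw [integral_rpow (Or.inl (by linarith)), sub_add_cancel, one_rpow, zero_rpow hα.ne']
  ring

theorem intervalIntegrable_rpow_sub_one_mul (hα : 0 < α) (hf : ContinuousOn f (Icc 0 1)) :
    IntervalIntegrable (fun x => x ^ (α - 1) * f x) MeasureTheory.volume 0 1 :=
  (intervalIntegral.intervalIntegrable_rpow' (by linarith)).mul_continuousOn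
    (by rwa [uIcc_of_le zero_le_one])

theorem integral_rpow_sub_one_mul_const (hα : 0 < α) (c : ℝ) :
    ∫ x in (0 : ℝ)..1, x ^ (α - 1) * c = c / α := by
  rw [intervalIntegral.integral_mul_const, integral_rpow_sub_one_zero_one hα, one_div_mul_eq_div]

theorem div_le_integral_rpow_sub_one_mul (hα : 0 < α) (hf : ContinuousOn f (Icc 0 1)) {m : ℝ}
    (hm : ∀ x ∈ Icc (0 : ℝ) 1, m ≤ f x) : m / α ≤ ∫ x in (0 : ℝ)..1, x ^ (α - 1) * f x := by
  rw [← integral_rpow_sub_one_mul_const hα]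
  refine intervalIntegral.integral_mono_on zero_le_one
    (intervalIntegrable_rpow_sub_one_mul hα continuousOn_const)
    (intervalIntegrable_rpow_sub_one_mul hα hf) fun x hx => ?_
  exact mul_le_mul_of_nonneg_left (hm x hx) (rpow_nonneg hx.1 _)

theorem integral_rpow_sub_one_mul_le_div (hα : 0 < α) (hf : ContinuousOn f (Icc 0 1)) {M : ℝ}
    (hM : ∀ x ∈ Icc (0 : ℝ) 1, f x ≤ M) : ∫ x in (0 : ℝ)..1, x ^ (α - 1) * f x ≤ M / α := by
  rw [← integral_rpow_sub_one_mul_const hα]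
  refine intervalIntegral.integral_mono_on zero_le_one
    (intervalIntegrable_rpow_sub_one_mul hα hf)
    (intervalIntegrable_rpow_sub_one_mul hα continuousOn_const) fun x hx => ?_
  exact mul_le_mul_of_nonneg_left (hM x hx) (rpow_nonneg hx.1 _)

end WeightedIntegral

section BCoeff

variable {α : ℝ} {n : ℕ}

theorem bCoeff_one (α : ℝ) (n : ℕ) :
    bCoeff α 1 n = ∫ x in (0 : ℝ)..1, x ^ (α - 1) * ((n : ℝ) - x) ^ (-α) := by
  simp [bCoeff]

theorem continuousOn_sub_rpow_neg (hn : 1 < (n : ℝ)) :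
    ContinuousOn (fun x : ℝ => ((n : ℝ) - x) ^ (-α)) (Icc 0 1) :=
  (continuousOn_const.sub continuousOn_id).rpow_const fun x hx =>
    Or.inl (by simp only [Pi.sub_apply, id_eq]; linarith [hx.2])

theorem rpow_neg_div_le_bCoeff_one (hα : 0 < α) (hn : 1 < (n : ℝ)) :
    (n : ℝ) ^ (-α) / α ≤ bCoeff α 1 n := by
  rw [bCoeff_one]
  refine div_le_integral_rpow_sub_one_mul hα (continuousOn_sub_rpow_neg hn) fun x hx => ?_
  exact rpow_le_rpow_of_nonpos (by linarith [hx.2]) (by linarith [hx.1]) (by linarith)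

theorem bCoeff_one_le_sub_one_rpow_neg_div (hα : 0 < α) (hn : 1 < (n : ℝ)) :
    bCoeff α 1 n ≤ ((n : ℝ) - 1) ^ (-α) / α := by
  rw [bCoeff_one]
  refine integral_rpow_sub_one_mul_le_div hα (continuousOn_sub_rpow_neg hn) fun x hx => ?_
  exact rpow_le_rpow_of_nonpos (by linarith) (by linarith [hx.2]) (by linarith)

end BCoeff

theorem div_Gamma_mul_rpow_neg_div {α c : ℝ} (hα : 0 < α) (hc : 0 ≤ c) :
    α / Gamma (1 - α) * (c ^ (-α) / α) = 1 / (Gamma (1 - α) * c ^ α) := by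
  rw [rpow_neg hc]
  field_simp

theorem a0n_bounds (α : ℝ) (h0 : 0 < α) (h1 : α < 1) (n : ℕ) (hn : 2 ≤ n) :
    1 / (Real.Gamma (1 - α) * (n : ℝ) ^ α) ≤ (α / Real.Gamma (1 - α)) * bCoeff α 1 n ∧
    (α / Real.Gamma (1 - α)) * bCoeff α 1 n ≤ 1 / (Real.Gamma (1 - α) * ((n : ℝ) - 1) ^ α) := by
  have hn' : 1 < (n : ℝ) := by exact_mod_cast hn
  have hfactor : 0 ≤ α / Gamma (1 - α) := div_nonneg h0.le (Gamma_pos_of_pos (by linarith)).le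
  constructor
  · rw [← div_Gamma_mul_rpow_neg_div h0 (Nat.cast_nonneg n)]
    exact mul_le_mul_of_nonneg_left (rpow_neg_div_le_bCoeff_one h0 hn') hfactor
  · rw [← div_Gamma_mul_rpow_neg_div h0 (sub_nonneg.mpr hn'.le)]
    exact mul_le_mul_of_nonneg_left (bCoeff_one_le_sub_one_rpow_neg_div h0 hn') hfactor
end

section
/- For every α ∈ (0,1) there exists ε₀ > 0 such that for all ε ∈ (0, ε₀): (2^ε(1−α−ε)−(1−α))/α + (ε/(1−ε)) Γ(α+ε)Γ(1−α) + (απ/sin(απ)) ( (1 − 2^ε(1−α−ε))/α − 1/(1−ε) ) > 0. -/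
/-!
The expression vanishes at `ε = 0`, so it suffices that its derivative there is positive.
By Euler's reflection formula `Γ(α)Γ(1-α) = K/α` with `K = απ / sin(απ) ≥ 1`, and the
derivative simplifies to `((K - 1)(1 - (1-α) log 2) + K(1-α)) / α`, which is positive
because `log 2 < 1`.
-/

open Real Filter Topology Set

theorem HasDerivAt.eventually_gt_of_deriv_pos {f : ℝ → ℝ} {f' x : ℝ} (hf : HasDerivAt f f' x)
    (hf' : 0 < f') : ∀ᶠ y in 𝓝[>] x, f x < f y := by
  have hslope : Tendsto (slope f x) (𝓝[>] x) (𝓝 f') :=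
    (hasDerivAt_iff_tendsto_slope.mp hf).mono_left (nhdsGT_le_nhdsNE x)
  filter_upwards [hslope.eventually (eventually_gt_nhds hf'), self_mem_nhdsWithin]
    with y hpos hy
  rw [slope_def_field] at hpos
  exact sub_pos.mp ((div_pos_iff_of_pos_right (sub_pos.mpr hy)).mp hpos)

theorem one_le_div_sin {t : ℝ} (ht₀ : 0 < t) (htπ : t < π) : 1 ≤ t / sin t := by
  rw [one_le_div (sin_pos_of_pos_of_lt_pi ht₀ htπ)]
  exact (sin_lt ht₀).le

theorem hasDerivAt_rpow_mul_sub_at_zero {b : ℝ} (hb : 0 < b) (a : ℝ) :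
    HasDerivAt (fun ε : ℝ => b ^ ε * (a - ε)) (log b * a - 1) 0 :=
  ((hasStrictDerivAt_const_rpow hb 0).hasDerivAt.mul
    ((hasDerivAt_id' 0).const_sub a)).congr_deriv (by simp; ring)

theorem hasDerivAt_div_one_sub_at_zero : HasDerivAt (fun ε : ℝ => ε / (1 - ε)) 1 0 :=
  ((hasDerivAt_id' 0).div ((hasDerivAt_id' 0).const_sub 1) (by norm_num)).congr_deriv
    (by norm_num)

theorem hasDerivAt_one_div_one_sub_at_zero : HasDerivAt (fun ε : ℝ => 1 / (1 - ε)) 1 0 :=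
  ((hasDerivAt_const 0 1).div ((hasDerivAt_id' 0).const_sub 1) (by norm_num)).congr_deriv
    (by norm_num)

theorem hasDerivAt_Gamma_add {α : ℝ} (hα : 0 < α) :
    HasDerivAt (fun ε : ℝ => Gamma (α + ε)) (deriv Gamma α) 0 := by
  have hΓ : DifferentiableAt ℝ Gamma (α + 0) := by
    refine differentiableAt_Gamma fun m hm => ?_
    linarith [(Nat.cast_nonneg m : (0 : ℝ) ≤ m)]
  simpa using hΓ.hasDerivAt.comp_const_add α 0

theorem hasDerivAt_key_expr {α : ℝ} (hα : 0 < α) {b : ℝ} (hb : 0 < b) (k : ℝ) :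
    HasDerivAt (fun ε : ℝ => (b ^ ε * (1 - α - ε) - (1 - α)) / α +
        (ε / (1 - ε)) * Gamma (α + ε) * Gamma (1 - α) +
        k * ((1 - b ^ ε * (1 - α - ε)) / α - 1 / (1 - ε)))
      ((log b * (1 - α) - 1) / α + Gamma α * Gamma (1 - α) +
        k * ((1 - log b * (1 - α)) / α - 1)) 0 := by
  have hpow := hasDerivAt_rpow_mul_sub_at_zero hb (1 - α)
  refine (((hpow.sub_const (1 - α)).div_const α).add
    ((hasDerivAt_div_one_sub_at_zero.mul (hasDerivAt_Gamma_add hα)).mul_const _)).add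
    (((hpow.const_sub 1).div_const α).sub hasDerivAt_one_div_one_sub_at_zero |>.const_mul k)
    |>.congr_deriv ?_
  simp only [add_zero, one_mul]
  ring

theorem deriv_key_expr_pos {α : ℝ} (h0 : 0 < α) (h1 : α < 1) :
    0 < (log 2 * (1 - α) - 1) / α + Gamma α * Gamma (1 - α) +
        α * π / sin (α * π) * ((1 - log 2 * (1 - α)) / α - 1) := by
  set K := α * π / sin (α * π) with hK_def
  have hK : 1 ≤ K := one_le_div_sin (by positivity) (by nlinarith [pi_pos])
  have hc : 0 < 1 - log 2 * (1 - α) := by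
    nlinarith [log_two_lt_d9, log_pos one_lt_two]
  have hΓ : Gamma α * Gamma (1 - α) = K / α := by
    rw [Gamma_mul_Gamma_one_sub, mul_comm π α, hK_def, mul_div_assoc,
      mul_div_cancel_left₀ _ h0.ne']
  have hL : (log 2 * (1 - α) - 1) / α + K / α + K * ((1 - log 2 * (1 - α)) / α - 1) =
      ((K - 1) * (1 - log 2 * (1 - α)) + K * (1 - α)) / α := by
    field_simp
    ring
  rw [hΓ, hL]
  have hfirst : 0 ≤ (K - 1) * (1 - log 2 * (1 - α)) := mul_nonneg (by linarith) hc.le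
  have hsecond : 0 < K * (1 - α) := mul_pos (by linarith) (by linarith)
  exact div_pos (by linarith) h0

theorem key_positivity (α : ℝ) (h0 : 0 < α) (h1 : α < 1) :
    ∃ ε₀ : ℝ, 0 < ε₀ ∧ ∀ ε : ℝ, 0 < ε → ε < ε₀ →
      ((2:ℝ) ^ ε * (1 - α - ε) - (1 - α)) / α +
        (ε / (1 - ε)) * Real.Gamma (α + ε) * Real.Gamma (1 - α) +
        (α * Real.pi / Real.sin (α * Real.pi)) *
          ((1 - (2:ℝ) ^ ε * (1 - α - ε)) / α - 1 / (1 - ε)) > 0 := by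
  have hincr := (hasDerivAt_key_expr h0 two_pos (α * π / sin (α * π)))
    |>.eventually_gt_of_deriv_pos (deriv_key_expr_pos h0 h1)
  obtain ⟨ε₀, hε₀, hsub⟩ := mem_nhdsGT_iff_exists_Ioo_subset.mp hincr
  refine ⟨ε₀, hε₀, fun ε hε hεε₀ => ?_⟩
  have hpos := hsub ⟨hε, hεε₀⟩
  simpa [div_self h0.ne'] using hpos
end
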